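/- Let V be a type, let G be a simple graph on V that is acyclic, let w : V → V → ℤ satisfy w x y = - (w y x) whenever x and y are adjacent in G, and suppose for each connected component K of G a base vertex c(K) ∈ K is chosen. Then there exists a function f : V → ℤ such that f (c K) = 0 for every connected component K, and f y = f x + w x y for every pair of adjacent vertices x, y. -/
import Mathlib

open SimpleGraph

private def ws {V : Type*} {G : SimpleGraph V} (w : V → V → ℤ) {a b : V} (p : G.Walk a b) : ℤ :=
  (p.darts.map fun d => w d.fst d.snd).sum

private lemma ws_append {V : Type*} {G : SimpleGraph V} (w : V → V → ℤ) {a b d : V}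
    (p : G.Walk a b) (q : G.Walk b d) :
    ws w (p.append q) = ws w p + ws w q := by
  simp [ws, Walk.darts_append]

private lemma ws_eq_of_isPath {V : Type*} {G : SimpleGraph V} (hG : G.IsAcyclic)
    (w : V → V → ℤ) {a b : V}
    (p q : G.Walk a b) (hp : p.IsPath) (hq : q.IsPath) : ws w p = ws w q := by
  have := hG.path_unique ⟨p, hp⟩ ⟨q, hq⟩
  simpa using congrArg (fun r : G.Path a b => ws w r.1) this

/-- If `G` is an acyclic simple graph, `w` an edge-antisymmetric integer weight
function, and for each connected component `K` a base vertex `c K ∈ K` is chosen,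
then there is a stratification `f` vanishing at each base vertex and satisfying
`f y = f x + w x y` across every edge. -/
theorem acyclic_stratification_base {V : Type*} (G : SimpleGraph V) (hG : G.IsAcyclic)
    (w : V → V → ℤ) (hw : ∀ x y, G.Adj x y → w x y = - w y x)
    (c : G.ConnectedComponent → V)
    (hc : ∀ K : G.ConnectedComponent, G.connectedComponentMk (c K) = K) :
    ∃ f : V → ℤ, (∀ K : G.ConnectedComponent, f (c K) = 0) ∧
      ∀ x y, G.Adj x y → f y = f x + w x y := by
  classical
  have reach : ∀ v : V, G.Reachable (c (G.connectedComponentMk v)) v := fun v =>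
    SimpleGraph.ConnectedComponent.eq.mp (hc _)
  set f : V → ℤ := fun v => ws w ((reach v).some.toPath : G.Path _ _).1 with hf
  have fval : ∀ (v a : V), c (G.connectedComponentMk v) = a → ∀ (p : G.Walk a v),
      p.IsPath → f v = ws w p := by
    intro v a h p hp
    subst h
    exact ws_eq_of_isPath hG w _ p ((reach v).some.toPath.2) hp
  refine ⟨f, ?_, ?_⟩
  · intro K
    have h0 : f (c K) = ws w (Walk.nil : G.Walk (c K) (c K)) :=
      fval (c K) (c K) (congrArg c (hc K)) Walk.nil Walk.IsPath.nil
    simpa [ws] using h0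
  · intro x y h
    have hxy : c (G.connectedComponentMk y) = c (G.connectedComponentMk x) :=
      congrArg c (SimpleGraph.ConnectedComponent.eq.mpr h.symm.reachable)
    set P : G.Path (c (G.connectedComponentMk x)) x := (reach x).some.toPath with hP
    have hfx : f x = ws w P.1 := fval x _ rfl P.1 P.2
    by_cases hy : y ∈ P.1.support
    · have hP1 : (P.1.takeUntil y hy).IsPath := P.2.takeUntil hy
      have hP2 : (P.1.dropUntil y hy).IsPath := P.2.dropUntil hy
      have hsingle : (Walk.cons h.symm Walk.nil : G.Walk y x).IsPath := by
        simp [Walk.cons_isPath_iff, h.ne']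
      have h2 : ws w (P.1.dropUntil y hy) = w y x := by
        have := ws_eq_of_isPath hG w _ _ hP2 hsingle
        simpa [ws] using this
      have hsplit : ws w P.1 = ws w (P.1.takeUntil y hy) + w y x := by
        conv_lhs => rw [← Walk.take_spec P.1 hy]
        rw [ws_append, h2]
      have hfy : f y = ws w (P.1.takeUntil y hy) := fval y _ hxy _ hP1
      rw [hfy, hfx, hsplit, hw x y h]
      ring
    · have hQ : (P.1.concat h).IsPath := by
        rw [← Walk.isPath_reverse_iff, Walk.reverse_concat]
        exact P.2.reverse.cons (by simpa using hy)
      have hfy : f y = ws w (P.1.concat h) := fval y _ hxy _ hQ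
      rw [hfy, hfx, Walk.concat_eq_append, ws_append]
      simp [ws]
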